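/- arXiv:1802.00758 — 3 statements merged into one kernel-verified Lean document; each statement's English description precedes it below -/
import Mathlib

section
/- Fix d : ℕ and a partition of a finite Train ⊆ (Fin d → Bool) into disjoint Good and Bad. Let ℓ ⊆ (Fin d → Bool) be a nonempty finite set and let x ∈ Fin d be an index such that all elements of ℓ have the same value at coordinate x. Then for every k ≥ 1, WE^k(ℓ, x) = min over i ∈ Fin d of WE^{k−1}(ℓ, i). Consequently IG^1(ℓ, x) = 0, and for k ≥ 2, if the maximum over all i ∈ Fin d of the (k−1)-look-ahead information gain IG^{k−1}(ℓ, i) equals 0, then IG^k(ℓ, x) = 0. -/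
/-- The entropy `H(ℓ)` of a finite set `ℓ` with respect to the positive class `Good`:
with `p(ℓ) = |ℓ ∩ Good| / |ℓ|`, `H(ℓ) = −p·log p − (1−p)·log(1−p)` (natural logarithm;
`Real.log 0 = 0` gives the convention `0·log 0 = 0`, and `H(∅) = 0`). -/
noncomputable def entH {d : ℕ} (Good ℓ : Finset (Fin d → Bool)) : ℝ :=
  -((((ℓ ∩ Good).card : ℝ) / ℓ.card) * Real.log (((ℓ ∩ Good).card : ℝ) / ℓ.card))
  - ((1 - ((ℓ ∩ Good).card : ℝ) / ℓ.card) * Real.log (1 - ((ℓ ∩ Good).card : ℝ) / ℓ.card))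

/-- The `k`-step weighted entropy: `WE^0(ℓ, i) = |ℓ|·H(ℓ)` and
`WE^{k+1}(ℓ, i) = min over i₀ i₁ of WE^k(ℓ[i=0], i₀) + WE^k(ℓ[i=1], i₁)`. -/
noncomputable def WE {d : ℕ} (Good : Finset (Fin d → Bool)) :
    ℕ → Finset (Fin d → Bool) → Fin d → ℝ
  | 0, ℓ, _ => (ℓ.card : ℝ) * entH Good ℓ
  | k + 1, ℓ, i => ⨅ i₀ : Fin d, ⨅ i₁ : Fin d,
      (WE Good k (ℓ.filter fun v => v i = false) i₀ +
       WE Good k (ℓ.filter fun v => v i = true) i₁)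

/-- The `k`-look-ahead information gain `IG^k(ℓ, i) = H(ℓ) − WE^k(ℓ, i)/|ℓ|`. -/
noncomputable def IGk {d : ℕ} (Good : Finset (Fin d → Bool)) (k : ℕ)
    (ℓ : Finset (Fin d → Bool)) (i : Fin d) : ℝ :=
  entH Good ℓ - WE Good k ℓ i / ℓ.card

/-- The standard (ID3) information gain
`IG(ℓ, i) = H(ℓ) − (|ℓ[i=0]|/|ℓ|)·H(ℓ[i=0]) − (|ℓ[i=1]|/|ℓ|)·H(ℓ[i=1])`. -/
noncomputable def IG {d : ℕ} (Good : Finset (Fin d → Bool))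
    (ℓ : Finset (Fin d → Bool)) (i : Fin d) : ℝ :=
  entH Good ℓ
  - ((ℓ.filter fun v => v i = false).card : ℝ) / ℓ.card * entH Good (ℓ.filter fun v => v i = false)
  - ((ℓ.filter fun v => v i = true).card : ℝ) / ℓ.card * entH Good (ℓ.filter fun v => v i = true)

theorem WE_empty {d : ℕ} (Good : Finset (Fin d → Bool)) (k : ℕ) (i : Fin d) :
    WE Good k ∅ i = 0 := by
  induction k generalizing i with
  | zero => simp [WE]
  | succ k ih => simp [WE, ih]

theorem IGk_zero {d : ℕ} (Good ℓ : Finset (Fin d → Bool)) (i : Fin d) : IGk Good 0 ℓ i = 0 := by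
  rcases ℓ.eq_empty_or_nonempty with rfl | hne
  · simp [IGk, entH]
  · simp [IGk, WE, hne.card_pos.ne']

/-- Splitting on a coordinate that is constant on `ℓ` leaves `ℓ` on one side and `∅` on the
other, so it only spends one step of look-ahead. -/
theorem WE_succ_of_forall_eq {d : ℕ} (Good ℓ : Finset (Fin d → Bool)) (k : ℕ) {x : Fin d}
    {b : Bool} (hb : ∀ v ∈ ℓ, v x = b) : WE Good (k + 1) ℓ x = ⨅ i : Fin d, WE Good k ℓ i := by
  have : Nonempty (Fin d) := ⟨x⟩
  have hsame : ℓ.filter (fun v => v x = b) = ℓ := Finset.filter_true_of_mem hb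
  have hother : ℓ.filter (fun v => v x = !b) = ∅ :=
    Finset.filter_false_of_mem fun v hv => by simp [hb v hv]
  cases b <;> simp only [Bool.not_false, Bool.not_true] at hother <;>
    simp [WE, hsame, hother, WE_empty]

theorem iSup_IGk {d : ℕ} [Nonempty (Fin d)] (Good : Finset (Fin d → Bool)) (k : ℕ)
    (ℓ : Finset (Fin d → Bool)) :
    ⨆ i : Fin d, IGk Good k ℓ i = entH Good ℓ - (⨅ i : Fin d, WE Good k ℓ i) / ℓ.card :=
  (Antitone.map_ciInf_of_continuousAt (f := fun t => entH Good ℓ - t / ℓ.card) (by fun_prop)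
    (fun _ _ h => by dsimp only; gcongr) (Set.finite_range _).bddBelow).symm

theorem IGk_succ_of_forall_eq {d : ℕ} (Good ℓ : Finset (Fin d → Bool)) (k : ℕ) {x : Fin d}
    {b : Bool} (hb : ∀ v ∈ ℓ, v x = b) :
    IGk Good (k + 1) ℓ x = ⨆ i : Fin d, IGk Good k ℓ i := by
  have : Nonempty (Fin d) := ⟨x⟩
  rw [iSup_IGk, IGk, WE_succ_of_forall_eq Good ℓ k hb]

theorem constant_coordinate_lookahead_general
    (d : ℕ) (Good : Finset (Fin d → Bool))
    (ℓ : Finset (Fin d → Bool)) (x : Fin d)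
    (hconst : ∀ v ∈ ℓ, ∀ w ∈ ℓ, v x = w x) :
    (∀ k : ℕ, WE Good (k + 1) ℓ x = ⨅ i : Fin d, WE Good k ℓ i) ∧
    IGk Good 1 ℓ x = 0 ∧
    (∀ k : ℕ, 2 ≤ k → (⨆ i : Fin d, IGk Good (k - 1) ℓ i) = 0 → IGk Good k ℓ x = 0) := by
  obtain ⟨b, hb⟩ : ∃ b, ∀ v ∈ ℓ, v x = b := by
    rcases ℓ.eq_empty_or_nonempty with rfl | ⟨v₀, hv₀⟩
    · exact ⟨false, by simp⟩
    · exact ⟨v₀ x, fun v hv => hconst v hv v₀ hv₀⟩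
  refine ⟨fun k => WE_succ_of_forall_eq Good ℓ k hb, ?_, fun k hk hsup => ?_⟩
  · simp [IGk_succ_of_forall_eq Good ℓ 0 hb, IGk_zero]
  · obtain ⟨m, rfl⟩ : ∃ m, k = m + 1 := ⟨k - 1, by omega⟩
    rw [IGk_succ_of_forall_eq Good ℓ m hb]
    simpa using hsup

/-- If all elements of a nonempty `ℓ` share the same value at coordinate `x`, then for every
`k ≥ 1`, `WE^k(ℓ, x) = min over i of WE^{k−1}(ℓ, i)`; consequently `IG^1(ℓ, x) = 0`, and for
`k ≥ 2`, if the maximal `(k−1)`-look-ahead information gain is `0` then `IG^k(ℓ, x) = 0`. -/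
theorem constant_coordinate_lookahead
    (d : ℕ) (Train Good Bad : Finset (Fin d → Bool))
    (hpart : Good ∪ Bad = Train) (hdisj : Disjoint Good Bad)
    (ℓ : Finset (Fin d → Bool)) (hne : ℓ.Nonempty) (x : Fin d)
    (hconst : ∀ v ∈ ℓ, ∀ w ∈ ℓ, v x = w x) :
    (∀ k : ℕ, WE Good (k + 1) ℓ x = ⨅ i : Fin d, WE Good k ℓ i) ∧
    IGk Good 1 ℓ x = 0 ∧
    (∀ k : ℕ, 2 ≤ k → (⨆ i : Fin d, IGk Good (k - 1) ℓ i) = 0 → IGk Good k ℓ x = 0) :=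
  constant_coordinate_lookahead_general d Good ℓ x hconst
end

section
/- Fix d : ℕ and a partition of a finite Train ⊆ (Fin d → Bool) into disjoint Good and Bad. For every finite set ℓ ⊆ (Fin d → Bool), every index i ∈ Fin d, and every k : ℕ, one has WE^{k+1}(ℓ, i) ≤ WE^k(ℓ, i). Consequently, for nonempty ℓ the k-look-ahead information gain IG^k(ℓ, i) is nondecreasing in k; in particular IG^k(ℓ, i) ≥ IG^1(ℓ, i) ≥ 0 for all k ≥ 1 (incrementality of the look-ahead construction). -/
lemma mul_log_div_eq (a s : ℝ) (ha : 0 ≤ a) (has : a ≤ s) :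
    a * Real.log (a / s) = a * Real.log a - a * Real.log s := by
  rcases eq_or_lt_of_le ha with h | h
  · simp [← h]
  · have hs : 0 < s := lt_of_lt_of_le h has
    rw [Real.log_div (ne_of_gt h) (ne_of_gt hs)]; ring

lemma logsum2 (a0 a1 s0 s1 : ℝ) (h0 : 0 ≤ a0) (h0' : a0 ≤ s0) (h1 : 0 ≤ a1) (h1' : a1 ≤ s1) :
    (a0 + a1) * Real.log ((a0 + a1) / (s0 + s1))
      ≤ a0 * Real.log (a0 / s0) + a1 * Real.log (a1 / s1) := by
  rcases eq_or_lt_of_le (add_nonneg h0 h1) with hA | hA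
  · have ha0 : a0 = 0 := by linarith
    have ha1 : a1 = 0 := by linarith
    simp [ha0, ha1]
  · have hS : (0:ℝ) < s0 + s1 := lt_of_lt_of_le hA (add_le_add h0' h1')
    have key : ∀ a s : ℝ, 0 ≤ a → a ≤ s →
        a * Real.log ((a0 + a1) / (s0 + s1)) + a - s * ((a0 + a1) / (s0 + s1))
          ≤ a * Real.log (a / s) := by
      intro a s ha has
      rcases eq_or_lt_of_le ha with h | h
      · have hs : 0 ≤ s := le_trans ha has
        have : 0 ≤ s * ((a0 + a1) / (s0 + s1)) := by positivity
        simp [← h]; linarith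
      · have hs : 0 < s := lt_of_lt_of_le h has
        have hx : (0:ℝ) < ((a0 + a1) / (s0 + s1)) / (a / s) := by positivity
        have := Real.log_le_sub_one_of_pos hx
        rw [Real.log_div (by positivity) (by positivity)] at this
        have h2 : Real.log ((a0+a1)/(s0+s1)) - Real.log (a/s)
            ≤ s * ((a0+a1)/(s0+s1)) / a - 1 := by
          calc Real.log ((a0+a1)/(s0+s1)) - Real.log (a/s)
              ≤ ((a0+a1)/(s0+s1)) / (a/s) - 1 := this
            _ = s * ((a0+a1)/(s0+s1)) / a - 1 := by field_simp
        have h3 := mul_le_mul_of_nonneg_left h2 (le_of_lt h)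
        have h4 : a * (s * ((a0+a1)/(s0+s1)) / a - 1) = s * ((a0+a1)/(s0+s1)) - a := by
          field_simp
        rw [h4] at h3
        linarith [h3]
    have k0 := key a0 s0 h0 h0'
    have k1 := key a1 s1 h1 h1'
    have hc : (s0 + s1) * ((a0 + a1) / (s0 + s1)) = a0 + a1 := by field_simp
    nlinarith [k0, k1]

lemma logsum2' (a0 a1 s0 s1 : ℝ) (h0 : 0 ≤ a0) (h0' : a0 ≤ s0) (h1 : 0 ≤ a1) (h1' : a1 ≤ s1) :
    (a0 + a1) * Real.log (a0 + a1) - (a0 + a1) * Real.log (s0 + s1)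
      ≤ (a0 * Real.log a0 - a0 * Real.log s0) + (a1 * Real.log a1 - a1 * Real.log s1) := by
  have h := logsum2 a0 a1 s0 s1 h0 h0' h1 h1'
  rw [mul_log_div_eq a0 s0 h0 h0', mul_log_div_eq a1 s1 h1 h1',
    mul_log_div_eq (a0+a1) (s0+s1) (add_nonneg h0 h1) (add_le_add h0' h1')] at h
  linarith

lemma phi_superadd (a0 b0 a1 b1 : ℝ) (ha0 : 0 ≤ a0) (hb0 : 0 ≤ b0) (ha1 : 0 ≤ a1) (hb1 : 0 ≤ b1) :
    ((a0 + b0) * Real.log (a0 + b0) - a0 * Real.log a0 - b0 * Real.log b0)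
    + ((a1 + b1) * Real.log (a1 + b1) - a1 * Real.log a1 - b1 * Real.log b1)
    ≤ (a0 + a1 + (b0 + b1)) * Real.log (a0 + a1 + (b0 + b1))
      - (a0 + a1) * Real.log (a0 + a1) - (b0 + b1) * Real.log (b0 + b1) := by
  have h1 := logsum2' a0 a1 (a0 + b0) (a1 + b1) ha0 (by linarith) ha1 (by linarith)
  have h2 := logsum2' b0 b1 (a0 + b0) (a1 + b1) hb0 (by linarith) hb1 (by linarith)
  have e : a0 + b0 + (a1 + b1) = a0 + a1 + (b0 + b1) := by ring
  rw [e] at h1 h2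
  linarith

lemma phi_nonneg (a b : ℝ) (ha : 0 ≤ a) (hb : 0 ≤ b) :
    0 ≤ (a + b) * Real.log (a + b) - a * Real.log a - b * Real.log b := by
  have key : ∀ x y : ℝ, 0 ≤ x → 0 ≤ y → x * Real.log x ≤ x * Real.log (x + y) := by
    intro x y hx hy
    rcases eq_or_lt_of_le hx with h | h
    · simp [← h]
    · exact mul_le_mul_of_nonneg_left (Real.log_le_log h (by linarith)) hx
  have k1 := key a b ha hb
  have k2 := key b a hb ha
  rw [add_comm b a] at k2
  linarith

lemma WE_zero_eq {d : ℕ} (Good ℓ : Finset (Fin d → Bool)) (i : Fin d) :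
    WE Good 0 ℓ i =
      (((ℓ ∩ Good).card : ℝ) + ((ℓ.card : ℝ) - ((ℓ ∩ Good).card : ℝ)))
        * Real.log (((ℓ ∩ Good).card : ℝ) + ((ℓ.card : ℝ) - ((ℓ ∩ Good).card : ℝ)))
      - ((ℓ ∩ Good).card : ℝ) * Real.log ((ℓ ∩ Good).card : ℝ)
      - ((ℓ.card : ℝ) - ((ℓ ∩ Good).card : ℝ))
          * Real.log ((ℓ.card : ℝ) - ((ℓ ∩ Good).card : ℝ)) := by
  set g : ℝ := ((ℓ ∩ Good).card : ℝ) with hgdef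
  set n : ℝ := (ℓ.card : ℝ) with hndef
  have hg : 0 ≤ g := by positivity
  have hgn : g ≤ n := by
    rw [hgdef, hndef]
    exact_mod_cast Finset.card_le_card (Finset.inter_subset_left)
  show n * entH Good ℓ = _
  rcases eq_or_lt_of_le (by positivity : (0:ℝ) ≤ n) with h | h
  · have hg0 : g = 0 := by linarith
    simp [← h, hg0]
  · have hn : n ≠ 0 := ne_of_gt h
    have e1 : 1 - g / n = (n - g) / n := by field_simp
    have e2 : g * Real.log (g / n) = g * Real.log g - g * Real.log n :=
      mul_log_div_eq g n hg hgn
    have e3 : (n - g) * Real.log ((n - g) / n) = (n - g) * Real.log (n - g) - (n - g) * Real.log n :=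
      mul_log_div_eq (n - g) n (by linarith) (by linarith)
    rw [entH]
    rw [← hgdef, ← hndef, e1]
    have hgn' : n * (g / n) = g := by field_simp
    have hnn : n * ((n - g) / n) = n - g := by field_simp
    calc n * (-(g / n * Real.log (g / n)) - (n - g) / n * Real.log ((n - g) / n))
        = -(n * (g / n) * Real.log (g / n)) - n * ((n - g) / n) * Real.log ((n - g) / n) := by ring
      _ = -(g * Real.log (g / n)) - (n - g) * Real.log ((n - g) / n) := by rw [hgn', hnn]
      _ = _ := by rw [e2, e3]; ring_nf

lemma filter_cards {d : ℕ} (Good ℓ : Finset (Fin d → Bool)) (i : Fin d) :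
    ((ℓ.filter fun v => v i = false).card + (ℓ.filter fun v => v i = true).card = ℓ.card) ∧
    (((ℓ.filter fun v => v i = false) ∩ Good).card + ((ℓ.filter fun v => v i = true) ∩ Good).card
      = (ℓ ∩ Good).card) := by
  have key : ∀ s : Finset (Fin d → Bool),
      (s.filter fun v => v i = false).card + (s.filter fun v => v i = true).card = s.card := by
    intro s
    have h := Finset.card_filter_add_card_filter_not (s := s)
      (p := fun v => v i = false)
    have e : (s.filter fun v => ¬ v i = false) = s.filter fun v => v i = true := by
      apply Finset.filter_congr
      intro v _; simp
    rw [e] at h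
    exact h
  refine ⟨key ℓ, ?_⟩
  rw [Finset.filter_inter, Finset.filter_inter]
  exact key (ℓ ∩ Good)

lemma WE_zero_split {d : ℕ} (Good ℓ : Finset (Fin d → Bool)) (i i0 i1 : Fin d) :
    WE Good 0 (ℓ.filter fun v => v i = false) i0 + WE Good 0 (ℓ.filter fun v => v i = true) i1
      ≤ WE Good 0 ℓ i := by
  obtain ⟨hn, hg⟩ := filter_cards Good ℓ i
  set ℓ0 := ℓ.filter fun v => v i = false with hℓ0
  set ℓ1 := ℓ.filter fun v => v i = true with hℓ1
  have hnr : (ℓ0.card : ℝ) + (ℓ1.card : ℝ) = (ℓ.card : ℝ) := by exact_mod_cast hn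
  have hgr : ((ℓ0 ∩ Good).card : ℝ) + ((ℓ1 ∩ Good).card : ℝ) = ((ℓ ∩ Good).card : ℝ) := by
    exact_mod_cast hg
  have hs0 : ((ℓ0 ∩ Good).card : ℝ) ≤ (ℓ0.card : ℝ) := by
    exact_mod_cast Finset.card_le_card Finset.inter_subset_left
  have hs1 : ((ℓ1 ∩ Good).card : ℝ) ≤ (ℓ1.card : ℝ) := by
    exact_mod_cast Finset.card_le_card Finset.inter_subset_left
  rw [WE_zero_eq Good ℓ0 i0, WE_zero_eq Good ℓ1 i1, WE_zero_eq Good ℓ i]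
  have h := phi_superadd ((ℓ0 ∩ Good).card : ℝ) ((ℓ0.card : ℝ) - ((ℓ0 ∩ Good).card : ℝ))
      ((ℓ1 ∩ Good).card : ℝ) ((ℓ1.card : ℝ) - ((ℓ1 ∩ Good).card : ℝ))
      (by positivity) (by linarith) (by positivity) (by linarith)
  rw [show ((ℓ0.card : ℝ) - ((ℓ0 ∩ Good).card : ℝ)) + ((ℓ1.card : ℝ) - ((ℓ1 ∩ Good).card : ℝ))
      = (ℓ.card : ℝ) - ((ℓ ∩ Good).card : ℝ) from by linarith] at h
  rw [hgr] at h
  exact h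

lemma WE_nonneg {d : ℕ} (Good : Finset (Fin d → Bool)) :
    ∀ (k : ℕ) (ℓ : Finset (Fin d → Bool)) (i : Fin d), 0 ≤ WE Good k ℓ i := by
  intro k
  induction k with
  | zero =>
    intro ℓ i
    rw [WE_zero_eq]
    apply phi_nonneg
    · positivity
    · have : ((ℓ ∩ Good).card : ℝ) ≤ (ℓ.card : ℝ) := by
        exact_mod_cast Finset.card_le_card Finset.inter_subset_left
      linarith
  | succ k ih =>
    intro ℓ i
    show 0 ≤ ⨅ i₀ : Fin d, ⨅ i₁ : Fin d, _
    exact Real.iInf_nonneg fun i0 => Real.iInf_nonneg fun i1 => add_nonneg (ih _ _) (ih _ _)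

lemma bdd_of_nonneg {α : Sort*} (f : α → ℝ) (hf : ∀ j, 0 ≤ f j) : BddBelow (Set.range f) := by
  refine ⟨0, ?_⟩
  rintro _ ⟨j, rfl⟩
  exact hf j

lemma WE_succ_le {d : ℕ} (Good : Finset (Fin d → Bool)) :
    ∀ (k : ℕ) (ℓ : Finset (Fin d → Bool)) (i : Fin d), WE Good (k + 1) ℓ i ≤ WE Good k ℓ i := by
  intro k
  induction k with
  | zero =>
    intro ℓ i
    calc WE Good 1 ℓ i
        ≤ ⨅ i₁ : Fin d, (WE Good 0 (ℓ.filter fun v => v i = false) i +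
            WE Good 0 (ℓ.filter fun v => v i = true) i₁) :=
          ciInf_le (bdd_of_nonneg _ fun j => Real.iInf_nonneg fun j' =>
            add_nonneg (WE_nonneg Good 0 _ _) (WE_nonneg Good 0 _ _)) i
      _ ≤ WE Good 0 (ℓ.filter fun v => v i = false) i +
            WE Good 0 (ℓ.filter fun v => v i = true) i :=
          ciInf_le (bdd_of_nonneg _ fun j =>
            add_nonneg (WE_nonneg Good 0 _ _) (WE_nonneg Good 0 _ _)) i
      _ ≤ WE Good 0 ℓ i := WE_zero_split Good ℓ i i i
  | succ k ih =>
    intro ℓ i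
    show (⨅ i₀ : Fin d, ⨅ i₁ : Fin d, _) ≤ ⨅ i₀ : Fin d, ⨅ i₁ : Fin d, _
    haveI : Nonempty (Fin d) := ⟨i⟩
    refine ciInf_mono (bdd_of_nonneg _ fun j => Real.iInf_nonneg fun j' =>
      add_nonneg (WE_nonneg Good _ _ _) (WE_nonneg Good _ _ _)) fun i0 => ?_
    refine ciInf_mono (bdd_of_nonneg _ fun j =>
      add_nonneg (WE_nonneg Good _ _ _) (WE_nonneg Good _ _ _)) fun i1 => ?_
    exact add_le_add (ih _ _) (ih _ _)

/-- Incrementality: `WE^{k+1}(ℓ, i) ≤ WE^k(ℓ, i)` always; hence for nonempty `ℓ`, the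
`k`-look-ahead information gain is nondecreasing in `k`, and in particular
`IG^k(ℓ, i) ≥ IG^1(ℓ, i) ≥ 0` for all `k ≥ 1`. -/
theorem lookahead_incrementality
    (d : ℕ) (Train Good Bad : Finset (Fin d → Bool))
    (hpart : Good ∪ Bad = Train) (hdisj : Disjoint Good Bad) :
    (∀ (ℓ : Finset (Fin d → Bool)) (i : Fin d) (k : ℕ),
      WE Good (k + 1) ℓ i ≤ WE Good k ℓ i) ∧
    (∀ (ℓ : Finset (Fin d → Bool)), ℓ.Nonempty → ∀ i : Fin d,
      (∀ j k : ℕ, j ≤ k → IGk Good j ℓ i ≤ IGk Good k ℓ i) ∧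
      (∀ k : ℕ, 1 ≤ k → IGk Good 1 ℓ i ≤ IGk Good k ℓ i ∧ 0 ≤ IGk Good 1 ℓ i)) := by
  constructor
  · intro ℓ i k
    exact WE_succ_le Good k ℓ i
  · intro ℓ hℓ i
    have hn : (0:ℝ) < ℓ.card := by exact_mod_cast Finset.card_pos.mpr hℓ
    have anti : ∀ j k : ℕ, j ≤ k → WE Good k ℓ i ≤ WE Good j ℓ i := by
      have h : Antitone (fun n => WE Good n ℓ i) :=
        antitone_nat_of_succ_le (fun n => WE_succ_le Good n ℓ i)
      exact fun j k hjk => h hjk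
    have mono : ∀ j k : ℕ, j ≤ k → IGk Good j ℓ i ≤ IGk Good k ℓ i := by
      intro j k hjk
      unfold IGk
      have h := anti j k hjk
      have : WE Good k ℓ i / ℓ.card ≤ WE Good j ℓ i / ℓ.card :=
        (div_le_div_iff_of_pos_right hn).mpr h
      linarith
    refine ⟨mono, fun k hk => ⟨mono 1 k hk, ?_⟩⟩
    have h := WE_succ_le Good 0 ℓ i
    have h0 : WE Good 0 ℓ i = (ℓ.card : ℝ) * entH Good ℓ := rfl
    unfold IGk
    rw [sub_nonneg, div_le_iff₀ hn]
    rw [h0] at h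
    linarith
end

section
/- Fix d : ℕ and a finite set Train ⊆ (Fin d → Bool) partitioned into disjoint Good and Bad. Let X ⊆ Fin d, a : Fin d → Bool, and let ℓ be the cell of Train determined by (X, a). If ℓ is mixed, then there exist k with 1 ≤ k ≤ d − |X| and an index i ∈ Fin d such that the k-look-ahead information gain IG^k(ℓ, i) is strictly positive. (Thus the look-ahead procedure always finds a usable split for a mixed leaf, at look-ahead depth bounded by d − |X|.) -/
lemma entH_zero_of {d : ℕ} (Good ℓ : Finset (Fin d → Bool))
    (h : (ℓ ∩ Good).card = 0 ∨ (ℓ ∩ Good).card = ℓ.card) : entH Good ℓ = 0 := by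
  rcases h with h | h
  · simp [entH, h]
  · rcases eq_or_ne ℓ.card 0 with h0 | h0
    · simp [entH, h, h0]
    · have : ((ℓ ∩ Good).card : ℝ) / ℓ.card = 1 := by
        rw [h]; field_simp
      simp [entH, this]

lemma WE_nonpos {d : ℕ} (Good : Finset (Fin d → Bool)) :
    ∀ (k : ℕ) (S : Finset (Fin d)) (ℓ : Finset (Fin d → Bool)) (i : Fin d),
      (∀ u ∈ ℓ, ∀ v ∈ ℓ, ∀ j, j ∉ S → u j = v j) →
      S.card ≤ k → (i ∈ S ∨ S = ∅) → WE Good k ℓ i ≤ 0 := by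
  intro k
  induction k with
  | zero =>
    intro S ℓ i hagree hcard _
    have hS : S = ∅ := Finset.card_eq_zero.mp (Nat.le_zero.mp hcard)
    subst hS
    have hone : ℓ.card ≤ 1 := by
      apply Finset.card_le_one.mpr
      intro u hu v hv
      funext j
      exact hagree u hu v hv j (by simp)
    have hle : (ℓ ∩ Good).card ≤ ℓ.card := Finset.card_le_card Finset.inter_subset_left
    have : (ℓ ∩ Good).card = 0 ∨ (ℓ ∩ Good).card = ℓ.card := by omega
    rw [WE, entH_zero_of Good ℓ this, mul_zero]
  | succ k ih =>
    intro S ℓ i hagree hcard hi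
    have hhalf : ∀ b : Bool,
        WE Good k (ℓ.filter fun v => v i = b)
          (if h : (S.erase i).Nonempty then h.choose else i) ≤ 0 := by
      intro b
      set i' := if h : (S.erase i).Nonempty then h.choose else i with hi'
      apply ih (S.erase i)
      · intro u hu v hv j hj
        rcases eq_or_ne j i with rfl | hne
        · have hu' := (Finset.mem_filter.mp hu).2
          have hv' := (Finset.mem_filter.mp hv).2
          rw [hu', hv']
        · have hjS : j ∉ S := fun hjS => hj (Finset.mem_erase.mpr ⟨hne, hjS⟩)
          exact hagree u (Finset.mem_filter.mp hu).1 v (Finset.mem_filter.mp hv).1 j hjS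
      · rcases hi with hi | hi
        · have := Finset.card_erase_of_mem hi; omega
        · subst hi; simp
      · by_cases h : (S.erase i).Nonempty
        · left; rw [hi']; simp only [dif_pos h]; exact h.choose_spec
        · right; exact Finset.not_nonempty_iff_eq_empty.mp h
    set i₀ := if h : (S.erase i).Nonempty then h.choose else i
    rw [WE]
    have hbdd : ∀ g : Fin d → ℝ, BddBelow (Set.range g) :=
      fun g => (Set.finite_range g).bddBelow
    calc ⨅ j₀ : Fin d, ⨅ j₁ : Fin d,
          (WE Good k (ℓ.filter fun v => v i = false) j₀ +
           WE Good k (ℓ.filter fun v => v i = true) j₁)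
        ≤ ⨅ j₁ : Fin d, (WE Good k (ℓ.filter fun v => v i = false) i₀ +
           WE Good k (ℓ.filter fun v => v i = true) j₁) := ciInf_le (hbdd _) i₀
      _ ≤ WE Good k (ℓ.filter fun v => v i = false) i₀ +
           WE Good k (ℓ.filter fun v => v i = true) i₀ := ciInf_le (hbdd _) i₀
      _ ≤ 0 := add_nonpos (hhalf false) (hhalf true)

/-- For a mixed cell determined by `(X, a)`, the look-ahead procedure finds a usable split:
there are `k` with `1 ≤ k ≤ d − |X|` and an index `i` with strictly positive
`k`-look-ahead information gain. -/
theorem mixed_cell_has_positive_lookahead_gain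
    (d : ℕ) (Train Good Bad : Finset (Fin d → Bool))
    (hpart : Good ∪ Bad = Train) (hdisj : Disjoint Good Bad)
    (X : Finset (Fin d)) (a : Fin d → Bool)
    (ℓ : Finset (Fin d → Bool))
    (hcell : ℓ = Train.filter (fun v => ∀ i ∈ X, v i = a i))
    (hmixed : (ℓ ∩ Good).Nonempty ∧ (ℓ ∩ Bad).Nonempty) :
    ∃ k : ℕ, 1 ≤ k ∧ k ≤ d - X.card ∧ ∃ i : Fin d, 0 < IGk Good k ℓ i := by
  obtain ⟨⟨g, hg⟩, ⟨b, hb⟩⟩ := hmixed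
  have hgℓ : g ∈ ℓ := (Finset.mem_inter.mp hg).1
  have hbℓ : b ∈ ℓ := (Finset.mem_inter.mp hb).1
  have hgb : g ≠ b := by
    rintro rfl
    exact Finset.disjoint_left.mp hdisj (Finset.mem_inter.mp hg).2 (Finset.mem_inter.mp hb).2
  -- the set of free coordinates
  set S : Finset (Fin d) := Finset.univ \ X with hS
  have hagreeX : ∀ v ∈ ℓ, ∀ i ∈ X, v i = a i := by
    intro v hv i hi
    rw [hcell] at hv
    exact (Finset.mem_filter.mp hv).2 i hi
  have hSne : S.Nonempty := by
    obtain ⟨j, hj⟩ : ∃ j, g j ≠ b j := by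
      by_contra h
      push_neg at h
      exact hgb (funext h)
    refine ⟨j, Finset.mem_sdiff.mpr ⟨Finset.mem_univ j, fun hjX => ?_⟩⟩
    rw [hagreeX g hgℓ j hjX, hagreeX b hbℓ j hjX] at hj
    exact hj rfl
  have hScard : S.card = d - X.card := by
    rw [hS, Finset.card_sdiff_of_subset (Finset.subset_univ X)]
    simp
  obtain ⟨i, hiS⟩ := hSne
  refine ⟨S.card, ?_, le_of_eq hScard, i, ?_⟩
  · exact Finset.card_pos.mpr ⟨i, hiS⟩
  -- WE ≤ 0
  have hWE : WE Good S.card ℓ i ≤ 0 := by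
    apply WE_nonpos Good S.card S ℓ i ?_ le_rfl (Or.inl hiS)
    intro u hu v hv j hj
    have hjX : j ∈ X := by
      by_contra h
      exact hj (Finset.mem_sdiff.mpr ⟨Finset.mem_univ j, h⟩)
    rw [hagreeX u hu j hjX, hagreeX v hv j hjX]
  -- entropy is positive
  have hcardpos : 0 < ℓ.card := Finset.card_pos.mpr ⟨g, hgℓ⟩
  have hgood : 0 < (ℓ ∩ Good).card := Finset.card_pos.mpr ⟨g, hg⟩
  have hlt : (ℓ ∩ Good).card < ℓ.card := by
    have hdisj2 : Disjoint (ℓ ∩ Good) (ℓ ∩ Bad) :=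
      hdisj.mono Finset.inter_subset_right Finset.inter_subset_right
    have hsub : (ℓ ∩ Good) ∪ (ℓ ∩ Bad) ⊆ ℓ :=
      Finset.union_subset Finset.inter_subset_left Finset.inter_subset_left
    have := Finset.card_le_card hsub
    rw [Finset.card_union_of_disjoint hdisj2] at this
    have hbad : 0 < (ℓ ∩ Bad).card := Finset.card_pos.mpr ⟨b, hb⟩
    omega
  set p : ℝ := ((ℓ ∩ Good).card : ℝ) / ℓ.card with hp
  have hnpos : (0 : ℝ) < ℓ.card := by exact_mod_cast hcardpos
  have hp0 : 0 < p := div_pos (by exact_mod_cast hgood) hnpos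
  have hp1 : p < 1 := by
    rw [hp, div_lt_one hnpos]
    exact_mod_cast hlt
  have hent : 0 < entH Good ℓ := by
    have h1 : 0 < -(p * Real.log p) := by
      have := Real.log_neg hp0 hp1
      nlinarith
    have h2 : 0 < -((1 - p) * Real.log (1 - p)) := by
      have := Real.log_neg (by linarith : (0:ℝ) < 1 - p) (by linarith : 1 - p < 1)
      nlinarith
    have : entH Good ℓ = -(p * Real.log p) - ((1 - p) * Real.log (1 - p)) := rfl
    rw [this]; linarith
  have : WE Good S.card ℓ i / ℓ.card ≤ 0 :=
    div_nonpos_of_nonpos_of_nonneg hWE (le_of_lt hnpos)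
  rw [IGk]
  linarith
end
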